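/- arXiv:2404.18765 — 2 statements merged into one kernel-verified Lean document; each statement's English description precedes it below -/
import Mathlib

section
/- Under assumptions (A1)–(A4) with μ > 2, for every (f1,f2) ∈ 𝒦 and every η ∈ [s0,r0] one has (K1m·E1inf/(2·L1M·(μ+ν−1)²))·(s0^(−(μ+ν−1)) − η^(−(μ+ν−1)))² ≤ G1(η; f1,f2) ≤ G1sup, where G1sup = H1sup/(L1m·(μ+ν−1)·s0^(μ+ν−1)), H1sup = K1M/(E1inf·(μ+ν−1)·s0^(μ+ν−1)), E1inf = exp(−[a·N1M/(L1m·(μ−1)·s0^(2μ−2)) + D1·K1M/(H_inf·L1m·(2μ+ν−1)·s0^(2μ+ν−1))]) and H_inf = (K1m/(μ+ν−1))·(s0^(−(μ+ν−1)) − r0^(−(μ+ν−1))). -/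
open MeasureTheory Filter Topology

noncomputable section

/-- The bundle of fixed constants of the problem. -/
structure Cst where
  nu : ℝ
  mu : ℝ
  a : ℝ
  D1 : ℝ
  D2 : ℝ
  Q : ℝ
  D1s : ℝ
  D2s : ℝ
  L1m : ℝ
  L1M : ℝ
  N1m : ℝ
  N1M : ℝ
  K1m : ℝ
  K1M : ℝ
  L2m : ℝ
  L2M : ℝ
  N2m : ℝ
  N2M : ℝ
  K2m : ℝ
  K2M : ℝ
  Lt1 : ℝ
  Nt1 : ℝ
  Kt1 : ℝ
  Lt2 : ℝ
  Nt2 : ℝ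
  Kt2 : ℝ

/-- The space `C[s0,r0]`, modeled as real functions continuous on `[s0,r0]`. -/
def C1 (s0 r0 : ℝ) : Set (ℝ → ℝ) := {f | ContinuousOn f (Set.Icc s0 r0)}

/-- The set `ℳ ⊆ C_b[r0,∞)`: bounded continuous functions on `[r0,∞)` with
`f(r0) = 0` and `f(η) → -1` as `η → ∞`. -/
def Mset (r0 : ℝ) : Set (ℝ → ℝ) :=
  {f | ContinuousOn f (Set.Ici r0) ∧ (∃ C, ∀ x ∈ Set.Ici r0, |f x| ≤ C) ∧
    f r0 = 0 ∧ Tendsto f atTop (𝓝 (-1))}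

/-- Sup norm of `f` over the set `S`. -/
def supOn (S : Set ℝ) (f : ℝ → ℝ) : ℝ := ⨆ x : S, |f x.1|

/-- Norm of the difference of two pairs in `𝒦 = C[s0,r0] × ℳ`. -/
def pairNorm (s0 r0 : ℝ) (f1 f2 g1 g2 : ℝ → ℝ) : ℝ :=
  max (supOn (Set.Icc s0 r0) (f1 - g1)) (supOn (Set.Ici r0) (f2 - g2))

/-- Positivity assumptions on all the fixed constants and on `s0, r0`. -/
def PosC (c : Cst) (s0 r0 : ℝ) : Prop :=
  0 < c.a ∧ 0 < c.nu ∧ c.nu < 1 ∧ 2 < c.mu ∧ 0 < s0 ∧ s0 < r0 ∧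
  0 < c.D1 ∧ 0 < c.D2 ∧ 0 < c.Q ∧ 0 < c.D1s ∧ 0 < c.D2s ∧
  0 < c.L1m ∧ 0 < c.L1M ∧ 0 < c.N1m ∧ 0 < c.N1M ∧ 0 < c.K1m ∧ 0 < c.K1M ∧
  0 < c.L2m ∧ 0 < c.L2M ∧ 0 < c.N2m ∧ 0 < c.N2M ∧ 0 < c.K2m ∧ 0 < c.K2M ∧
  0 < c.Lt1 ∧ 0 < c.Nt1 ∧ 0 < c.Kt1 ∧ 0 < c.Lt2 ∧ 0 < c.Nt2 ∧ 0 < c.Kt2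

/-- Positivity assumptions on all the fixed constants (no `s0, r0`). -/
def PosCst (c : Cst) : Prop :=
  0 < c.a ∧ 0 < c.nu ∧ c.nu < 1 ∧ 2 < c.mu ∧
  0 < c.D1 ∧ 0 < c.D2 ∧ 0 < c.Q ∧ 0 < c.D1s ∧ 0 < c.D2s ∧
  0 < c.L1m ∧ 0 < c.L1M ∧ 0 < c.N1m ∧ 0 < c.N1M ∧ 0 < c.K1m ∧ 0 < c.K1M ∧
  0 < c.L2m ∧ 0 < c.L2M ∧ 0 < c.N2m ∧ 0 < c.N2M ∧ 0 < c.K2m ∧ 0 < c.K2M ∧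
  0 < c.Lt1 ∧ 0 < c.Nt1 ∧ 0 < c.Kt1 ∧ 0 < c.Lt2 ∧ 0 < c.Nt2 ∧ 0 < c.Kt2

/-- Assumptions (A1)–(A4): continuity of the images of `L, N, K`, the two-sided
bounds and the Lipschitz bounds. -/
def Assum (c : Cst) (s0 r0 : ℝ) (L1 N1 K1 L2 N2 K2 : (ℝ → ℝ) → ℝ → ℝ) : Prop :=
  (∀ f1 ∈ C1 s0 r0,
    ContinuousOn (L1 f1) (Set.Icc s0 r0) ∧ ContinuousOn (N1 f1) (Set.Icc s0 r0) ∧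
      ContinuousOn (K1 f1) (Set.Icc s0 r0)) ∧
  (∀ f2 ∈ Mset r0,
    ContinuousOn (L2 f2) (Set.Ici r0) ∧ ContinuousOn (N2 f2) (Set.Ici r0) ∧
      ContinuousOn (K2 f2) (Set.Ici r0)) ∧
  (∀ f1 ∈ C1 s0 r0, ∀ η ∈ Set.Icc s0 r0,
    c.L1m * η ^ c.mu ≤ L1 f1 η ∧ L1 f1 η ≤ c.L1M * η ^ c.mu ∧
    c.N1m * η ^ (-c.mu) ≤ N1 f1 η ∧ N1 f1 η ≤ c.N1M * η ^ (-c.mu) ∧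
    c.K1m * η ^ (-c.mu) ≤ K1 f1 η ∧ K1 f1 η ≤ c.K1M * η ^ (-c.mu)) ∧
  (∀ f2 ∈ Mset r0, ∀ η ∈ Set.Ici r0,
    c.L2m * η ^ c.mu ≤ L2 f2 η ∧ L2 f2 η ≤ c.L2M * η ^ c.mu ∧
    c.N2m * η ^ (-c.mu) ≤ N2 f2 η ∧ N2 f2 η ≤ c.N2M * η ^ (-c.mu) ∧
    c.K2m * η ^ (-c.mu) ≤ K2 f2 η ∧ K2 f2 η ≤ c.K2M * η ^ (-c.mu)) ∧
  (∀ f1 ∈ C1 s0 r0, ∀ g1 ∈ C1 s0 r0, ∀ η ∈ Set.Icc s0 r0,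
    |L1 f1 η - L1 g1 η| ≤ c.Lt1 * supOn (Set.Icc s0 r0) (f1 - g1) ∧
    |N1 f1 η - N1 g1 η| ≤ c.Nt1 * supOn (Set.Icc s0 r0) (f1 - g1) ∧
    |K1 f1 η - K1 g1 η| ≤ c.Kt1 * η ^ (-c.mu) * supOn (Set.Icc s0 r0) (f1 - g1)) ∧
  (∀ f2 ∈ Mset r0, ∀ g2 ∈ Mset r0, ∀ η ∈ Set.Ici r0,
    |L2 f2 η - L2 g2 η| ≤ c.Lt2 * supOn (Set.Ici r0) (f2 - g2) ∧
    |N2 f2 η - N2 g2 η| ≤ c.Nt2 * supOn (Set.Ici r0) (f2 - g2) ∧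
    |K2 f2 η - K2 g2 η| ≤ c.Kt2 * η ^ (-c.mu) * supOn (Set.Ici r0) (f2 - g2))

/-- `H(f1,f2) = ∫_{s0}^{r0} K(f1)(v)/v^ν dv + ∫_{r0}^{∞} K(f2)(v)/v^ν dv`. -/
def Hf (c : Cst) (s0 r0 : ℝ) (L1 N1 K1 L2 N2 K2 : (ℝ → ℝ) → ℝ → ℝ) (f1 f2 : ℝ → ℝ) : ℝ :=
  (∫ v in s0..r0, K1 f1 v / v ^ c.nu) + ∫ v in Set.Ioi r0, K2 f2 v / v ^ c.nu

/-- `E1(η; f1,f2)`. -/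
def E1f (c : Cst) (s0 r0 : ℝ) (L1 N1 K1 L2 N2 K2 : (ℝ → ℝ) → ℝ → ℝ) (f1 f2 : ℝ → ℝ)
    (η : ℝ) : ℝ :=
  Real.exp (-(∫ v in s0..η,
    (2 * c.a * v * (N1 f1 v / L1 f1 v)
      + c.D1 / Hf c s0 r0 L1 N1 K1 L2 N2 K2 f1 f2 * (K1 f1 v / (L1 f1 v * v ^ c.nu)))))

/-- `Φ1(η; f1,f2)`. -/
def Phi1f (c : Cst) (s0 r0 : ℝ) (L1 N1 K1 L2 N2 K2 : (ℝ → ℝ) → ℝ → ℝ) (f1 f2 : ℝ → ℝ)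
    (η : ℝ) : ℝ :=
  ∫ v in s0..η, E1f c s0 r0 L1 N1 K1 L2 N2 K2 f1 f2 v / (L1 f1 v * v ^ c.nu)

/-- `H1(η; f1,f2)`. -/
def H1f (c : Cst) (s0 r0 : ℝ) (L1 N1 K1 L2 N2 K2 : (ℝ → ℝ) → ℝ → ℝ) (f1 f2 : ℝ → ℝ)
    (η : ℝ) : ℝ :=
  ∫ v in s0..η, K1 f1 v / (v ^ c.nu * E1f c s0 r0 L1 N1 K1 L2 N2 K2 f1 f2 v)

/-- `G1(η; f1,f2)`. -/
def G1f (c : Cst) (s0 r0 : ℝ) (L1 N1 K1 L2 N2 K2 : (ℝ → ℝ) → ℝ → ℝ) (f1 f2 : ℝ → ℝ)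
    (η : ℝ) : ℝ :=
  ∫ v in s0..η, E1f c s0 r0 L1 N1 K1 L2 N2 K2 f1 f2 v
    * H1f c s0 r0 L1 N1 K1 L2 N2 K2 f1 f2 v / (L1 f1 v * v ^ c.nu)

/-- `V1(f1,f2)(η)`. -/
def V1f (c : Cst) (s0 r0 : ℝ) (L1 N1 K1 L2 N2 K2 : (ℝ → ℝ) → ℝ → ℝ) (f1 f2 : ℝ → ℝ)
    (η : ℝ) : ℝ :=
  s0 ^ c.nu * c.Q * Real.exp (-s0 ^ 2)
      * (Phi1f c s0 r0 L1 N1 K1 L2 N2 K2 f1 f2 r0 - Phi1f c s0 r0 L1 N1 K1 L2 N2 K2 f1 f2 η)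
    + c.D1s / Hf c s0 r0 L1 N1 K1 L2 N2 K2 f1 f2 ^ 2
      * (G1f c s0 r0 L1 N1 K1 L2 N2 K2 f1 f2 r0 - G1f c s0 r0 L1 N1 K1 L2 N2 K2 f1 f2 η)

/-- `E2(η; f1,f2)`. -/
def E2f (c : Cst) (s0 r0 : ℝ) (L1 N1 K1 L2 N2 K2 : (ℝ → ℝ) → ℝ → ℝ) (f1 f2 : ℝ → ℝ)
    (η : ℝ) : ℝ :=
  Real.exp (-(∫ v in r0..η,
    (2 * c.a * v * (N2 f2 v / L2 f2 v)
      + c.D2 / Hf c s0 r0 L1 N1 K1 L2 N2 K2 f1 f2 * (K2 f2 v / (L2 f2 v * v ^ c.nu)))))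

/-- `Φ2(η; f1,f2)`. -/
def Phi2f (c : Cst) (s0 r0 : ℝ) (L1 N1 K1 L2 N2 K2 : (ℝ → ℝ) → ℝ → ℝ) (f1 f2 : ℝ → ℝ)
    (η : ℝ) : ℝ :=
  ∫ v in r0..η, E2f c s0 r0 L1 N1 K1 L2 N2 K2 f1 f2 v / (L2 f2 v * v ^ c.nu)

/-- `Φ2(∞; f1,f2)`. -/
def Phi2I (c : Cst) (s0 r0 : ℝ) (L1 N1 K1 L2 N2 K2 : (ℝ → ℝ) → ℝ → ℝ) (f1 f2 : ℝ → ℝ) : ℝ :=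
  ∫ v in Set.Ioi r0, E2f c s0 r0 L1 N1 K1 L2 N2 K2 f1 f2 v / (L2 f2 v * v ^ c.nu)

/-- `H2(η; f1,f2)`. -/
def H2f (c : Cst) (s0 r0 : ℝ) (L1 N1 K1 L2 N2 K2 : (ℝ → ℝ) → ℝ → ℝ) (f1 f2 : ℝ → ℝ)
    (η : ℝ) : ℝ :=
  ∫ v in r0..η, K2 f2 v / (v ^ c.nu * E2f c s0 r0 L1 N1 K1 L2 N2 K2 f1 f2 v)

/-- `G2(η; f1,f2)`. -/
def G2f (c : Cst) (s0 r0 : ℝ) (L1 N1 K1 L2 N2 K2 : (ℝ → ℝ) → ℝ → ℝ) (f1 f2 : ℝ → ℝ)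
    (η : ℝ) : ℝ :=
  ∫ v in r0..η, E2f c s0 r0 L1 N1 K1 L2 N2 K2 f1 f2 v
    * H2f c s0 r0 L1 N1 K1 L2 N2 K2 f1 f2 v / (L2 f2 v * v ^ c.nu)

/-- `G2(∞; f1,f2) = lim_{η→∞} G2(η; f1,f2)`. -/
def G2I (c : Cst) (s0 r0 : ℝ) (L1 N1 K1 L2 N2 K2 : (ℝ → ℝ) → ℝ → ℝ) (f1 f2 : ℝ → ℝ) : ℝ :=
  limUnder atTop (G2f c s0 r0 L1 N1 K1 L2 N2 K2 f1 f2)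

/-- `V2(f1,f2)(η)`. -/
def V2f (c : Cst) (s0 r0 : ℝ) (L1 N1 K1 L2 N2 K2 : (ℝ → ℝ) → ℝ → ℝ) (f1 f2 : ℝ → ℝ)
    (η : ℝ) : ℝ :=
  (c.D2s / Hf c s0 r0 L1 N1 K1 L2 N2 K2 f1 f2 ^ 2 * G2I c s0 r0 L1 N1 K1 L2 N2 K2 f1 f2 - 1)
      * (Phi2f c s0 r0 L1 N1 K1 L2 N2 K2 f1 f2 η / Phi2I c s0 r0 L1 N1 K1 L2 N2 K2 f1 f2)
    - c.D2s / Hf c s0 r0 L1 N1 K1 L2 N2 K2 f1 f2 ^ 2 * G2f c s0 r0 L1 N1 K1 L2 N2 K2 f1 f2 η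

/-! Constants appearing in the estimates. -/

def Hinf (c : Cst) (s0 r0 : ℝ) : ℝ :=
  c.K1m / (c.mu + c.nu - 1) * (s0 ^ (-(c.mu + c.nu - 1)) - r0 ^ (-(c.mu + c.nu - 1)))

def Hsup (c : Cst) (s0 r0 : ℝ) : ℝ :=
  (c.K1M * s0 ^ (-(c.mu + c.nu - 1)) + c.K2M * r0 ^ (-(c.mu + c.nu - 1))) / (c.mu + c.nu - 1)

def Htil (c : Cst) (s0 r0 : ℝ) : ℝ :=
  (c.Kt1 * s0 ^ (-(c.mu + c.nu - 1)) + c.Kt2 * r0 ^ (-(c.mu + c.nu - 1))) / (c.mu + c.nu - 1)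

/-- Limit of `Hinf` as `r0 → ∞`. -/
def HinfI (c : Cst) (s0 : ℝ) : ℝ := c.K1m / (c.mu + c.nu - 1) * s0 ^ (-(c.mu + c.nu - 1))

/-- Limit of `Hsup` as `r0 → ∞`. -/
def HsupI (c : Cst) (s0 : ℝ) : ℝ := c.K1M * s0 ^ (-(c.mu + c.nu - 1)) / (c.mu + c.nu - 1)

/-- Limit of `Htil` as `r0 → ∞`. -/
def HtilI (c : Cst) (s0 : ℝ) : ℝ := c.Kt1 * s0 ^ (-(c.mu + c.nu - 1)) / (c.mu + c.nu - 1)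

/-- `E1inf` as a function of the value `h` of `Hinf`. -/
def E1infG (c : Cst) (s0 h : ℝ) : ℝ :=
  Real.exp (-(c.a * c.N1M / (c.L1m * (c.mu - 1) * s0 ^ (2 * c.mu - 2))
    + c.D1 * c.K1M / (h * c.L1m * (2 * c.mu + c.nu - 1) * s0 ^ (2 * c.mu + c.nu - 1))))

/-- `Ẽ1` as a function of the values `h` of `Hinf` and `ht` of `Htil`. -/
def E1tilG (c : Cst) (s0 h ht : ℝ) : ℝ :=
  2 * c.a * (c.Nt1 / (c.L1m * (c.mu - 2) * s0 ^ (c.mu - 2))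
      + c.N1M * c.Lt1 / (c.L1m ^ 2 * (3 * c.mu - 2) * s0 ^ (3 * c.mu - 2)))
    + c.D1 * (c.Kt1 / (h * c.L1m * (2 * c.mu + c.nu - 1) * s0 ^ (2 * c.mu + c.nu - 1))
      + c.K1M / (h * c.L1m)
        * (ht / (h * (2 * c.mu + c.nu - 1) * s0 ^ (2 * c.mu + c.nu - 1))
          + c.Lt1 / (c.L1m * (3 * c.mu + c.nu - 1) * s0 ^ (3 * c.mu + c.nu - 1))))

def Phi1tilG (c : Cst) (s0 h ht : ℝ) : ℝ :=
  E1tilG c s0 h ht / (c.L1m * (c.mu + c.nu - 1) * s0 ^ (c.mu + c.nu - 1))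
    + c.Lt1 / (c.L1m ^ 2 * (2 * c.mu + c.nu - 1) * s0 ^ (2 * c.mu + c.nu - 1))

def H1supG (c : Cst) (s0 h : ℝ) : ℝ :=
  c.K1M / (E1infG c s0 h * (c.mu + c.nu - 1) * s0 ^ (c.mu + c.nu - 1))

def H1tilG (c : Cst) (s0 h ht : ℝ) : ℝ :=
  (c.Kt1 + c.K1M * E1tilG c s0 h ht / E1infG c s0 h)
    / (E1infG c s0 h * (c.mu + c.nu - 1) * s0 ^ (c.mu + c.nu - 1))

def G1supG (c : Cst) (s0 h : ℝ) : ℝ :=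
  H1supG c s0 h / (c.L1m * (c.mu + c.nu - 1) * s0 ^ (c.mu + c.nu - 1))

def G1tilG (c : Cst) (s0 h ht : ℝ) : ℝ :=
  H1supG c s0 h * Phi1tilG c s0 h ht
    + H1tilG c s0 h ht / (c.L1m * (c.mu + c.nu - 1) * s0 ^ (c.mu + c.nu - 1))

/-- `ε1` as a function of the values `h` of `Hinf`, `hs` of `Hsup`, `ht` of `Htil`. -/
def eps1G (c : Cst) (s0 h hs ht : ℝ) : ℝ :=
  2 * s0 ^ c.nu * c.Q * Real.exp (-s0 ^ 2) * Phi1tilG c s0 h ht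
    + 2 * c.D1s * (2 * G1supG c s0 h * hs * ht / h ^ 4 + G1tilG c s0 h ht / h ^ 2)

def E1inf (c : Cst) (s0 r0 : ℝ) : ℝ := E1infG c s0 (Hinf c s0 r0)
def E1til (c : Cst) (s0 r0 : ℝ) : ℝ := E1tilG c s0 (Hinf c s0 r0) (Htil c s0 r0)
def Phi1til (c : Cst) (s0 r0 : ℝ) : ℝ := Phi1tilG c s0 (Hinf c s0 r0) (Htil c s0 r0)
def H1sup (c : Cst) (s0 r0 : ℝ) : ℝ := H1supG c s0 (Hinf c s0 r0)
def H1til (c : Cst) (s0 r0 : ℝ) : ℝ := H1tilG c s0 (Hinf c s0 r0) (Htil c s0 r0)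
def G1sup (c : Cst) (s0 r0 : ℝ) : ℝ := G1supG c s0 (Hinf c s0 r0)
def G1til (c : Cst) (s0 r0 : ℝ) : ℝ := G1tilG c s0 (Hinf c s0 r0) (Htil c s0 r0)
def eps1 (c : Cst) (s0 r0 : ℝ) : ℝ := eps1G c s0 (Hinf c s0 r0) (Hsup c s0 r0) (Htil c s0 r0)

/-- `j1(s0) = lim_{r0→∞} ε1(r0,s0)`: the same expression with `Hinf, Hsup, Htil`
replaced by their limits as `r0 → ∞`. -/
def j1 (c : Cst) (s0 : ℝ) : ℝ := eps1G c s0 (HinfI c s0) (HsupI c s0) (HtilI c s0)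

def E2inf (c : Cst) (s0 r0 : ℝ) : ℝ :=
  Real.exp (-(c.a * c.N2M / (c.L2m * (c.mu - 1) * r0 ^ (2 * c.mu - 2))
    + c.D2 * c.K2M / (Hinf c s0 r0 * c.L2m * (2 * c.mu + c.nu - 1) * r0 ^ (2 * c.mu + c.nu - 1))))

def E2til (c : Cst) (s0 r0 : ℝ) : ℝ :=
  2 * c.a * (c.Nt2 / (c.L2m * (c.mu - 2) * r0 ^ (c.mu - 2))
      + c.N2M * c.Lt2 / (c.L2m ^ 2 * (3 * c.mu - 2) * r0 ^ (3 * c.mu - 2)))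
    + c.D2 * (c.Kt2 / (Hinf c s0 r0 * c.L2m * (2 * c.mu + c.nu - 1) * r0 ^ (2 * c.mu + c.nu - 1))
      + c.K2M / (Hinf c s0 r0 * c.L2m)
        * (Htil c s0 r0 / (Hinf c s0 r0 * (2 * c.mu + c.nu - 1) * r0 ^ (2 * c.mu + c.nu - 1))
          + c.Lt2 / (c.L2m * (3 * c.mu + c.nu - 1) * r0 ^ (3 * c.mu + c.nu - 1))))

def Phi2til (c : Cst) (s0 r0 : ℝ) : ℝ :=
  E2til c s0 r0 / (c.L2m * (c.mu + c.nu - 1) * r0 ^ (c.mu + c.nu - 1))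
    + c.Lt2 / (c.L2m ^ 2 * (2 * c.mu + c.nu - 1) * r0 ^ (2 * c.mu + c.nu - 1))

/-- `Φ2inf(∞)(r0,s0)`. -/
def Phi2infC (c : Cst) (s0 r0 : ℝ) : ℝ :=
  E2inf c s0 r0 / (c.L2M * (c.mu + c.nu - 1) * r0 ^ (c.mu + c.nu - 1))

/-- `Φ2sup(r0)`. -/
def Phi2supC (c : Cst) (r0 : ℝ) : ℝ := 1 / (c.L2m * (c.mu + c.nu - 1) * r0 ^ (c.mu + c.nu - 1))

def H2sup (c : Cst) (s0 r0 : ℝ) : ℝ :=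
  c.K2M / (E2inf c s0 r0 * (c.mu + c.nu - 1) * r0 ^ (c.mu + c.nu - 1))

def H2til (c : Cst) (s0 r0 : ℝ) : ℝ :=
  (c.Kt2 + c.K2M * E2til c s0 r0 / E2inf c s0 r0)
    / (E2inf c s0 r0 * (c.mu + c.nu - 1) * r0 ^ (c.mu + c.nu - 1))

def G2sup (c : Cst) (s0 r0 : ℝ) : ℝ :=
  H2sup c s0 r0 / (c.L2m * (c.mu + c.nu - 1) * r0 ^ (c.mu + c.nu - 1))

def G2til (c : Cst) (s0 r0 : ℝ) : ℝ :=
  H2sup c s0 r0 * Phi2til c s0 r0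
    + H2til c s0 r0 / (c.L2m * (c.mu + c.nu - 1) * r0 ^ (c.mu + c.nu - 1))

def eps21 (c : Cst) (s0 r0 : ℝ) : ℝ := 2 * Phi2til c s0 r0 / Phi2infC c s0 r0

def eps22 (c : Cst) (s0 r0 : ℝ) : ℝ :=
  G2til c s0 r0 / Hinf c s0 r0 ^ 2
    + 2 * G2sup c s0 r0 * Hsup c s0 r0 * Htil c s0 r0 / Hinf c s0 r0 ^ 4

def eps23 (c : Cst) (s0 r0 : ℝ) : ℝ :=
  Phi2supC c r0 / Phi2infC c s0 r0 * eps22 c s0 r0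
    + G2sup c s0 r0 / Hinf c s0 r0 ^ 2 * eps21 c s0 r0

def eps2 (c : Cst) (s0 r0 : ℝ) : ℝ := eps21 c s0 r0 + eps22 c s0 r0 + eps23 c s0 r0


/-! On `[s0,r0]` the coefficients `L, N, K` are pinned between constant multiples of `v^μ` and
`v^(-μ)`, so each integrand in the chain `Hinf ≤ H`, `E1inf ≤ E1 ≤ 1`,
`K1m/p · (s0^(-p) - η^(-p)) ≤ H1 ≤ H1sup` (with `p = μ + ν - 1`) is squeezed between multiples of
powers `v^(-(q+1))`, whose integrals are explicit. Feeding the bounds on `E1` and `H1` into the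
integrand of `G1` gives the upper bound at once, and the lower bound after integrating
`(s0^(-p) - v^(-p)) · v^(-(p+1))`, the derivative of `(s0^(-p) - v^(-p))² / (2p)`. -/

open Set Real

lemma continuousOn_rpow_const_Icc {a b : ℝ} (ha : 0 < a) (e : ℝ) :
    ContinuousOn (fun v : ℝ => v ^ e) (Icc a b) :=
  continuousOn_id.rpow_const fun _ hx => Or.inl (ha.trans_le hx.1).ne'

lemma continuousOn_primitive_of_continuousOn {f : ℝ → ℝ} {a b : ℝ} (hab : a ≤ b)
    (hf : ContinuousOn f (Icc a b)) : ContinuousOn (fun x => ∫ v in a..x, f v) (Icc a b) := by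
  have hint : IntegrableOn f (uIcc a b) volume := by
    simpa only [uIcc_of_le hab] using hf.integrableOn_Icc
  simpa only [uIcc_of_le hab] using intervalIntegral.continuousOn_primitive_interval hint

lemma integral_rpow_neg_add_one {a b q : ℝ} (ha : 0 < a) (hab : a ≤ b) (hq : q ≠ 0) :
    ∫ v in a..b, v ^ (-(q + 1)) = (a ^ (-q) - b ^ (-q)) / q := by
  have h0 : (0 : ℝ) ∉ uIcc a b := by
    rw [uIcc_of_le hab]
    exact fun h => (lt_irrefl 0) (ha.trans_le h.1)
  rw [integral_rpow (Or.inr ⟨by contrapose! hq; linarith, h0⟩), show -(q + 1) + 1 = -q by ring,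
    div_eq_div_iff (neg_ne_zero.mpr hq) hq]
  ring

lemma integral_le_div_of_le_mul_rpow {f : ℝ → ℝ} {a b q C : ℝ} (ha : 0 < a) (hab : a ≤ b)
    (hq : 0 < q) (hC : 0 ≤ C) (hf : ∀ v ∈ Icc a b, f v ≤ C * v ^ (-(q + 1))) :
    ∫ v in a..b, f v ≤ C / (q * a ^ q) := by
  by_cases hint : IntervalIntegrable f volume a b
  swap
  · rw [intervalIntegral.integral_undef hint]
    positivity
  calc ∫ v in a..b, f v ≤ ∫ v in a..b, C * v ^ (-(q + 1)) :=
        intervalIntegral.integral_mono_on hab hint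
          ((continuousOn_const.mul (continuousOn_rpow_const_Icc ha _)).intervalIntegrable_of_Icc
            hab) hf
    _ = C * ((a ^ (-q) - b ^ (-q)) / q) := by
        rw [intervalIntegral.integral_const_mul, integral_rpow_neg_add_one ha hab hq.ne']
    _ ≤ C * (a ^ (-q) / q) := by
        gcongr
        linarith [rpow_nonneg (ha.le.trans hab) (-q)]
    _ = C / (q * a ^ q) := by
        rw [rpow_neg ha.le]
        field_simp

lemma mul_le_integral_of_mul_rpow_le {f : ℝ → ℝ} {a b q C : ℝ} (ha : 0 < a) (hab : a ≤ b)
    (hq : q ≠ 0) (hint : IntervalIntegrable f volume a b)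
    (hf : ∀ v ∈ Icc a b, C * v ^ (-(q + 1)) ≤ f v) :
    C / q * (a ^ (-q) - b ^ (-q)) ≤ ∫ v in a..b, f v := by
  rw [div_mul_eq_mul_div, mul_div_assoc, ← integral_rpow_neg_add_one ha hab hq,
    ← intervalIntegral.integral_const_mul]
  exact intervalIntegral.integral_mono_on hab
    ((continuousOn_const.mul (continuousOn_rpow_const_Icc ha _)).intervalIntegrable_of_Icc hab)
    hint hf

lemma integral_sub_rpow_mul_rpow {a b q : ℝ} (ha : 0 < a) (hab : a ≤ b) (hq : q ≠ 0) :
    ∫ v in a..b, (a ^ (-q) - v ^ (-q)) * v ^ (-(q + 1))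
      = (a ^ (-q) - b ^ (-q)) ^ 2 / (2 * q) := by
  have hderiv : ∀ v ∈ uIcc a b, HasDerivAt (fun v => (a ^ (-q) - v ^ (-q)) ^ 2 / (2 * q))
      ((a ^ (-q) - v ^ (-q)) * v ^ (-(q + 1))) v := by
    intro v hv
    rw [uIcc_of_le hab] at hv
    have hv0 : v ≠ 0 := (ha.trans_le hv.1).ne'
    refine ((((hasDerivAt_rpow_const (p := -q) (Or.inl hv0)).const_sub (a ^ (-q))).pow 2).div_const
      (2 * q)).congr_deriv ?_
    rw [show -q - 1 = -(q + 1) by ring]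
    field_simp
    ring
  rw [intervalIntegral.integral_eq_sub_of_hasDerivAt hderiv]
  · simp
  · refine ContinuousOn.intervalIntegrable_of_Icc hab ?_
    exact (continuousOn_const.sub (continuousOn_rpow_const_Icc ha _)).mul
      (continuousOn_rpow_const_Icc ha _)

lemma rpow_neg_add_sub_one_add_one {v : ℝ} (hv : 0 < v) (μ ν : ℝ) :
    v ^ (-(μ + ν - 1 + 1)) = v ^ (-μ) / v ^ ν := by
  rw [show -(μ + ν - 1 + 1) = -μ - ν by ring, rpow_sub hv]

section Estimates

lemma PosC.s0_pos {c : Cst} {s0 r0 : ℝ} (h : PosC c s0 r0) : 0 < s0 := h.2.2.2.2.1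

lemma PosC.s0_lt_r0 {c : Cst} {s0 r0 : ℝ} (h : PosC c s0 r0) : s0 < r0 := h.2.2.2.2.2.1

lemma PosC.exponent_pos {c : Cst} {s0 r0 : ℝ} (h : PosC c s0 r0) : 0 < c.mu + c.nu - 1 := by
  linarith [h.2.1, h.2.2.2.1]

lemma PosC.L1m_pos {c : Cst} {s0 r0 : ℝ} (h : PosC c s0 r0) : 0 < c.L1m :=
  h.2.2.2.2.2.2.2.2.2.2.2.1

lemma PosC.K1m_pos {c : Cst} {s0 r0 : ℝ} (h : PosC c s0 r0) : 0 < c.K1m :=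
  h.2.2.2.2.2.2.2.2.2.2.2.2.2.2.2.1

lemma PosC.K1M_pos {c : Cst} {s0 r0 : ℝ} (h : PosC c s0 r0) : 0 < c.K1M :=
  h.2.2.2.2.2.2.2.2.2.2.2.2.2.2.2.2.1

variable {c : Cst} {s0 r0 : ℝ} {L1 N1 K1 L2 N2 K2 : (ℝ → ℝ) → ℝ → ℝ} {f1 f2 : ℝ → ℝ}

lemma L1_pos (hpos : PosC c s0 r0) (hA : Assum c s0 r0 L1 N1 K1 L2 N2 K2) (hf1 : f1 ∈ C1 s0 r0)
    {v : ℝ} (hv : v ∈ Icc s0 r0) : 0 < L1 f1 v := by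
  obtain ⟨-, -, -, -, hs0, -, -, -, -, -, -, hL1m, -⟩ := hpos
  have := rpow_pos_of_pos (hs0.trans_le hv.1) c.mu
  nlinarith [(hA.2.2.1 f1 hf1 v hv).1]

lemma N1_nonneg (hpos : PosC c s0 r0) (hA : Assum c s0 r0 L1 N1 K1 L2 N2 K2) (hf1 : f1 ∈ C1 s0 r0)
    {v : ℝ} (hv : v ∈ Icc s0 r0) : 0 ≤ N1 f1 v := by
  obtain ⟨-, -, -, -, hs0, -, -, -, -, -, -, -, -, hN1m, -⟩ := hpos
  have := rpow_pos_of_pos (hs0.trans_le hv.1) (-c.mu)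
  nlinarith [(hA.2.2.1 f1 hf1 v hv).2.2.1]

lemma K1_nonneg (hpos : PosC c s0 r0) (hA : Assum c s0 r0 L1 N1 K1 L2 N2 K2) (hf1 : f1 ∈ C1 s0 r0)
    {v : ℝ} (hv : v ∈ Icc s0 r0) : 0 ≤ K1 f1 v := by
  obtain ⟨-, -, -, -, hs0, -, -, -, -, -, -, -, -, -, -, hK1m, -⟩ := hpos
  have := rpow_pos_of_pos (hs0.trans_le hv.1) (-c.mu)
  nlinarith [(hA.2.2.1 f1 hf1 v hv).2.2.2.2.1]

lemma Hinf_pos (hpos : PosC c s0 r0) : 0 < Hinf c s0 r0 := by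
  obtain ⟨-, hnu, -, hmu, hs0, hs0r0, -, -, -, -, -, -, -, -, -, hK1m, -⟩ := hpos
  have hp : 0 < c.mu + c.nu - 1 := by linarith
  exact mul_pos (div_pos hK1m hp)
    (sub_pos.mpr (rpow_lt_rpow_of_neg hs0 hs0r0 (by linarith)))

lemma Hinf_le_Hf (hpos : PosC c s0 r0) (hA : Assum c s0 r0 L1 N1 K1 L2 N2 K2)
    (hf1 : f1 ∈ C1 s0 r0) (hf2 : f2 ∈ Mset r0) :
    Hinf c s0 r0 ≤ Hf c s0 r0 L1 N1 K1 L2 N2 K2 f1 f2 := by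
  obtain ⟨-, hnu, -, hmu, hs0, hs0r0, -, -, -, -, -, -, -, -, -, -, -, -, -, -, -, hK2m, -⟩ := hpos
  have hK1c := (hA.1 f1 hf1).2.2
  have hinner : Hinf c s0 r0 ≤ ∫ v in s0..r0, K1 f1 v / v ^ c.nu := by
    refine mul_le_integral_of_mul_rpow_le hs0 hs0r0.le (by linarith) ?_ fun v hv => ?_
    · exact (hK1c.div (continuousOn_rpow_const_Icc hs0 _) fun v hv =>
        (rpow_pos_of_pos (hs0.trans_le hv.1) _).ne').intervalIntegrable_of_Icc hs0r0.le
    · have hv0 := hs0.trans_le hv.1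
      rw [rpow_neg_add_sub_one_add_one hv0, ← mul_div_assoc]
      exact div_le_div_of_nonneg_right (hA.2.2.1 f1 hf1 v hv).2.2.2.2.1 (rpow_nonneg hv0.le _)
  have houter : 0 ≤ ∫ v in Ioi r0, K2 f2 v / v ^ c.nu := by
    refine setIntegral_nonneg measurableSet_Ioi fun v hv => ?_
    have hv0 : 0 < v := (hs0.trans hs0r0).trans hv
    have := rpow_pos_of_pos hv0 (-c.mu)
    have := (hA.2.2.2.1 f2 hf2 v (mem_Ici.mpr (le_of_lt hv))).2.2.2.2.1
    exact div_nonneg (by nlinarith) (rpow_nonneg hv0.le _)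
  exact hinner.trans (le_add_of_nonneg_right houter)

def E1exponentIntegrand (c : Cst) (L N K : ℝ → ℝ) (H v : ℝ) : ℝ :=
  2 * c.a * v * (N v / L v) + c.D1 / H * (K v / (L v * v ^ c.nu))

lemma E1f_eq_exp (x : ℝ) : E1f c s0 r0 L1 N1 K1 L2 N2 K2 f1 f2 x =
    exp (-∫ v in s0..x,
      E1exponentIntegrand c (L1 f1) (N1 f1) (K1 f1) (Hf c s0 r0 L1 N1 K1 L2 N2 K2 f1 f2) v) :=
  rfl

lemma continuousOn_E1drift (hpos : PosC c s0 r0) (hA : Assum c s0 r0 L1 N1 K1 L2 N2 K2)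
    (hf1 : f1 ∈ C1 s0 r0) :
    ContinuousOn (fun v => 2 * c.a * v * (N1 f1 v / L1 f1 v)) (Icc s0 r0) :=
  (continuousOn_const.mul continuousOn_id).mul
    ((hA.1 f1 hf1).2.1.div (hA.1 f1 hf1).1 fun _ hv => (L1_pos hpos hA hf1 hv).ne')

lemma continuousOn_E1damping (hpos : PosC c s0 r0) (hA : Assum c s0 r0 L1 N1 K1 L2 N2 K2)
    (hf1 : f1 ∈ C1 s0 r0) (H : ℝ) :
    ContinuousOn (fun v => c.D1 / H * (K1 f1 v / (L1 f1 v * v ^ c.nu))) (Icc s0 r0) :=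
  continuousOn_const.mul ((hA.1 f1 hf1).2.2.div
    ((hA.1 f1 hf1).1.mul (continuousOn_rpow_const_Icc hpos.s0_pos _)) fun _ hv =>
      (mul_pos (L1_pos hpos hA hf1 hv) (rpow_pos_of_pos (hpos.s0_pos.trans_le hv.1) _)).ne')

lemma E1exponentIntegrand_nonneg (hpos : PosC c s0 r0) (hA : Assum c s0 r0 L1 N1 K1 L2 N2 K2)
    (hf1 : f1 ∈ C1 s0 r0) {H : ℝ} (hH : 0 ≤ H) {v : ℝ} (hv : v ∈ Icc s0 r0) :
    0 ≤ E1exponentIntegrand c (L1 f1) (N1 f1) (K1 f1) H v := by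
  have hL := L1_pos hpos hA hf1 hv
  have hN := N1_nonneg hpos hA hf1 hv
  have hK := K1_nonneg hpos hA hf1 hv
  obtain ⟨ha, -, -, -, hs0, -, hD1, -⟩ := hpos
  have hv0 := hs0.trans_le hv.1
  unfold E1exponentIntegrand
  positivity

lemma integral_E1drift_le (hpos : PosC c s0 r0) (hA : Assum c s0 r0 L1 N1 K1 L2 N2 K2)
    (hf1 : f1 ∈ C1 s0 r0) {x : ℝ} (hx : x ∈ Icc s0 r0) :
    ∫ v in s0..x, 2 * c.a * v * (N1 f1 v / L1 f1 v) ≤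
      c.a * c.N1M / (c.L1m * (c.mu - 1) * s0 ^ (2 * c.mu - 2)) := by
  obtain ⟨ha, -, -, hmu, hs0, -, -, -, -, -, -, hL1m, -, -, hN1M, -⟩ := hpos
  have hmu1 : c.mu - 1 ≠ 0 := by linarith
  convert integral_le_div_of_le_mul_rpow (q := 2 * c.mu - 2) (C := 2 * c.a * c.N1M / c.L1m)
    hs0 hx.1 (by linarith) (by positivity) fun v hv => ?_ using 1
  · field_simp
  have hvI : v ∈ Icc s0 r0 := ⟨hv.1, hv.2.trans hx.2⟩
  obtain ⟨hL, -, -, hN, -⟩ := hA.2.2.1 f1 hf1 v hvI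
  have hv0 := hs0.trans_le hv.1
  calc 2 * c.a * v * (N1 f1 v / L1 f1 v)
      ≤ 2 * c.a * v * (c.N1M * v ^ (-c.mu) / (c.L1m * v ^ c.mu)) := by gcongr
    _ = 2 * c.a * c.N1M / c.L1m * v ^ (-(2 * c.mu - 2 + 1)) := by
        rw [show -(2 * c.mu - 2 + 1) = 1 + -c.mu - c.mu by ring, rpow_sub hv0, rpow_add hv0,
          rpow_one]
        ring

lemma integral_E1damping_le (hpos : PosC c s0 r0) (hA : Assum c s0 r0 L1 N1 K1 L2 N2 K2)
    (hf1 : f1 ∈ C1 s0 r0) {H : ℝ} (hH : Hinf c s0 r0 ≤ H) {x : ℝ} (hx : x ∈ Icc s0 r0) :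
    ∫ v in s0..x, c.D1 / H * (K1 f1 v / (L1 f1 v * v ^ c.nu)) ≤
      c.D1 * c.K1M / (Hinf c s0 r0 * c.L1m * (2 * c.mu + c.nu - 1)
        * s0 ^ (2 * c.mu + c.nu - 1)) := by
  have hHinf := Hinf_pos hpos
  have hL0 : ∀ v ∈ Icc s0 r0, 0 < L1 f1 v := fun _ hv => L1_pos hpos hA hf1 hv
  have hK0 : ∀ v ∈ Icc s0 r0, 0 ≤ K1 f1 v := fun _ hv => K1_nonneg hpos hA hf1 hv
  obtain ⟨-, hnu, -, hmu, hs0, -, hD1, -, -, -, -, hL1m, -, -, -, -, hK1M, -⟩ := hpos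
  convert integral_le_div_of_le_mul_rpow (q := 2 * c.mu + c.nu - 1)
    (C := c.D1 * c.K1M / (Hinf c s0 r0 * c.L1m)) hs0 hx.1 (by linarith) (by positivity)
    fun v hv => ?_ using 1
  · field_simp
  have hvI : v ∈ Icc s0 r0 := ⟨hv.1, hv.2.trans hx.2⟩
  obtain ⟨hL, -, -, -, -, hK⟩ := hA.2.2.1 f1 hf1 v hvI
  have hv0 := hs0.trans_le hv.1
  have hKv := hK0 v hvI
  have hLv := hL0 v hvI
  calc c.D1 / H * (K1 f1 v / (L1 f1 v * v ^ c.nu))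
      ≤ c.D1 / Hinf c s0 r0 * (c.K1M * v ^ (-c.mu) / (c.L1m * v ^ c.mu * v ^ c.nu)) := by
        gcongr
    _ = c.D1 * c.K1M / (Hinf c s0 r0 * c.L1m) * v ^ (-(2 * c.mu + c.nu - 1 + 1)) := by
        rw [show -(2 * c.mu + c.nu - 1 + 1) = -c.mu - c.mu - c.nu by ring, rpow_sub hv0,
          rpow_sub hv0]
        ring

lemma E1f_le_one (hpos : PosC c s0 r0) (hA : Assum c s0 r0 L1 N1 K1 L2 N2 K2)
    (hf1 : f1 ∈ C1 s0 r0) (hf2 : f2 ∈ Mset r0) {x : ℝ} (hx : x ∈ Icc s0 r0) :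
    E1f c s0 r0 L1 N1 K1 L2 N2 K2 f1 f2 x ≤ 1 := by
  have hH := (Hinf_pos hpos).le.trans (Hinf_le_Hf hpos hA hf1 hf2)
  rw [E1f_eq_exp, exp_le_one_iff, neg_nonpos]
  exact intervalIntegral.integral_nonneg hx.1 fun _ hv =>
    E1exponentIntegrand_nonneg hpos hA hf1 hH ⟨hv.1, hv.2.trans hx.2⟩

lemma E1inf_le_E1f (hpos : PosC c s0 r0) (hA : Assum c s0 r0 L1 N1 K1 L2 N2 K2)
    (hf1 : f1 ∈ C1 s0 r0) (hf2 : f2 ∈ Mset r0) {x : ℝ} (hx : x ∈ Icc s0 r0) :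
    E1inf c s0 r0 ≤ E1f c s0 r0 L1 N1 K1 L2 N2 K2 f1 f2 x := by
  have hsub : Icc s0 x ⊆ Icc s0 r0 := Icc_subset_Icc_right hx.2
  have hexponent := intervalIntegral.integral_add (μ := volume)
    (((continuousOn_E1drift hpos hA hf1).mono hsub).intervalIntegrable_of_Icc hx.1)
    (((continuousOn_E1damping hpos hA hf1 (Hf c s0 r0 L1 N1 K1 L2 N2 K2 f1 f2)).mono
      hsub).intervalIntegrable_of_Icc hx.1)
  rw [E1f_eq_exp]
  unfold E1exponentIntegrand
  rw [hexponent]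
  exact exp_le_exp.mpr (neg_le_neg (add_le_add (integral_E1drift_le hpos hA hf1 hx)
    (integral_E1damping_le hpos hA hf1 (Hinf_le_Hf hpos hA hf1 hf2) hx)))

lemma continuousOn_E1f (hpos : PosC c s0 r0) (hA : Assum c s0 r0 L1 N1 K1 L2 N2 K2)
    (hf1 : f1 ∈ C1 s0 r0) :
    ContinuousOn (E1f c s0 r0 L1 N1 K1 L2 N2 K2 f1 f2) (Icc s0 r0) :=
  continuous_exp.comp_continuousOn (continuousOn_primitive_of_continuousOn hpos.s0_lt_r0.le
    ((continuousOn_E1drift hpos hA hf1).add (continuousOn_E1damping hpos hA hf1 _))).neg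

lemma continuousOn_H1f_integrand (hpos : PosC c s0 r0) (hA : Assum c s0 r0 L1 N1 K1 L2 N2 K2)
    (hf1 : f1 ∈ C1 s0 r0) :
    ContinuousOn (fun v => K1 f1 v / (v ^ c.nu * E1f c s0 r0 L1 N1 K1 L2 N2 K2 f1 f2 v))
      (Icc s0 r0) :=
  (hA.1 f1 hf1).2.2.div ((continuousOn_rpow_const_Icc hpos.s0_pos _).mul
    (continuousOn_E1f hpos hA hf1)) fun _ hv =>
      (mul_pos (rpow_pos_of_pos (hpos.s0_pos.trans_le hv.1) _) (exp_pos _)).ne'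

lemma continuousOn_H1f (hpos : PosC c s0 r0) (hA : Assum c s0 r0 L1 N1 K1 L2 N2 K2)
    (hf1 : f1 ∈ C1 s0 r0) :
    ContinuousOn (H1f c s0 r0 L1 N1 K1 L2 N2 K2 f1 f2) (Icc s0 r0) :=
  continuousOn_primitive_of_continuousOn hpos.s0_lt_r0.le
    (continuousOn_H1f_integrand hpos hA hf1)

lemma H1f_nonneg (hpos : PosC c s0 r0) (hA : Assum c s0 r0 L1 N1 K1 L2 N2 K2)
    (hf1 : f1 ∈ C1 s0 r0) {x : ℝ} (hx : x ∈ Icc s0 r0) :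
    0 ≤ H1f c s0 r0 L1 N1 K1 L2 N2 K2 f1 f2 x :=
  intervalIntegral.integral_nonneg hx.1 fun _ hv =>
    div_nonneg (K1_nonneg hpos hA hf1 ⟨hv.1, hv.2.trans hx.2⟩)
      (mul_nonneg (rpow_nonneg (hpos.s0_pos.trans_le hv.1).le _) (exp_pos _).le)

lemma mul_le_H1f (hpos : PosC c s0 r0) (hA : Assum c s0 r0 L1 N1 K1 L2 N2 K2)
    (hf1 : f1 ∈ C1 s0 r0) (hf2 : f2 ∈ Mset r0) {x : ℝ} (hx : x ∈ Icc s0 r0) :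
    c.K1m / (c.mu + c.nu - 1) * (s0 ^ (-(c.mu + c.nu - 1)) - x ^ (-(c.mu + c.nu - 1)))
      ≤ H1f c s0 r0 L1 N1 K1 L2 N2 K2 f1 f2 x := by
  have hs0 : 0 < s0 := hpos.s0_pos
  have hp := hpos.exponent_pos
  have hsub : Icc s0 x ⊆ Icc s0 r0 := Icc_subset_Icc_right hx.2
  refine mul_le_integral_of_mul_rpow_le hs0 hx.1 hp.ne'
    (((continuousOn_H1f_integrand hpos hA hf1).mono hsub).intervalIntegrable_of_Icc hx.1)
    fun v hv => ?_
  have hv0 := hs0.trans_le hv.1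
  have hνpos := rpow_pos_of_pos hv0 c.nu
  calc c.K1m * v ^ (-(c.mu + c.nu - 1 + 1)) = c.K1m * v ^ (-c.mu) / v ^ c.nu := by
        rw [rpow_neg_add_sub_one_add_one hv0, mul_div_assoc]
    _ ≤ K1 f1 v / v ^ c.nu := by gcongr; exact (hA.2.2.1 f1 hf1 v (hsub hv)).2.2.2.2.1
    _ ≤ K1 f1 v / (v ^ c.nu * E1f c s0 r0 L1 N1 K1 L2 N2 K2 f1 f2 v) :=
        div_le_div_of_nonneg_left (K1_nonneg hpos hA hf1 (hsub hv)) (mul_pos hνpos (exp_pos _))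
          (mul_le_of_le_one_right hνpos.le (E1f_le_one hpos hA hf1 hf2 (hsub hv)))

lemma H1f_le_H1sup (hpos : PosC c s0 r0) (hA : Assum c s0 r0 L1 N1 K1 L2 N2 K2)
    (hf1 : f1 ∈ C1 s0 r0) (hf2 : f2 ∈ Mset r0) {x : ℝ} (hx : x ∈ Icc s0 r0) :
    H1f c s0 r0 L1 N1 K1 L2 N2 K2 f1 f2 x ≤ H1sup c s0 r0 := by
  have hs0 : 0 < s0 := hpos.s0_pos
  have hp := hpos.exponent_pos
  have hEinf : 0 < E1inf c s0 r0 := exp_pos _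
  have hsup : H1sup c s0 r0 =
      c.K1M / E1inf c s0 r0 / ((c.mu + c.nu - 1) * s0 ^ (c.mu + c.nu - 1)) := by
    rw [div_div, ← mul_assoc]
    rfl
  rw [hsup]
  refine integral_le_div_of_le_mul_rpow hs0 hx.1 hp
    (div_nonneg hpos.K1M_pos.le hEinf.le) fun v hv => ?_
  have hvI : v ∈ Icc s0 r0 := ⟨hv.1, hv.2.trans hx.2⟩
  have hv0 := hs0.trans_le hv.1
  have hνpos := rpow_pos_of_pos hv0 c.nu
  calc K1 f1 v / (v ^ c.nu * E1f c s0 r0 L1 N1 K1 L2 N2 K2 f1 f2 v)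
      ≤ c.K1M * v ^ (-c.mu) / (v ^ c.nu * E1inf c s0 r0) :=
        div_le_div₀ (mul_nonneg hpos.K1M_pos.le (rpow_nonneg hv0.le _))
          (hA.2.2.1 f1 hf1 v hvI).2.2.2.2.2 (mul_pos hνpos hEinf)
          (mul_le_mul_of_nonneg_left (E1inf_le_E1f hpos hA hf1 hf2 hvI) hνpos.le)
    _ = c.K1M / E1inf c s0 r0 * v ^ (-(c.mu + c.nu - 1 + 1)) := by
        rw [rpow_neg_add_sub_one_add_one hv0]
        ring

lemma continuousOn_G1f_integrand (hpos : PosC c s0 r0) (hA : Assum c s0 r0 L1 N1 K1 L2 N2 K2)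
    (hf1 : f1 ∈ C1 s0 r0) :
    ContinuousOn (fun v => E1f c s0 r0 L1 N1 K1 L2 N2 K2 f1 f2 v
      * H1f c s0 r0 L1 N1 K1 L2 N2 K2 f1 f2 v / (L1 f1 v * v ^ c.nu)) (Icc s0 r0) :=
  ((continuousOn_E1f hpos hA hf1).mul (continuousOn_H1f hpos hA hf1)).div
    ((hA.1 f1 hf1).1.mul (continuousOn_rpow_const_Icc hpos.s0_pos _)) fun _ hv =>
      (mul_pos (L1_pos hpos hA hf1 hv) (rpow_pos_of_pos (hpos.s0_pos.trans_le hv.1) _)).ne'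

lemma G1f_le_G1sup (hpos : PosC c s0 r0) (hA : Assum c s0 r0 L1 N1 K1 L2 N2 K2)
    (hf1 : f1 ∈ C1 s0 r0) (hf2 : f2 ∈ Mset r0) {η : ℝ} (hη : η ∈ Icc s0 r0) :
    G1f c s0 r0 L1 N1 K1 L2 N2 K2 f1 f2 η ≤ G1sup c s0 r0 := by
  have hs0 := hpos.s0_pos
  have hL1m : 0 < c.L1m := hpos.L1m_pos
  have hH1sup : 0 ≤ H1sup c s0 r0 := div_nonneg hpos.K1M_pos.le
    (mul_pos (mul_pos (exp_pos _) hpos.exponent_pos) (rpow_pos_of_pos hs0 _)).le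
  have hsup : G1sup c s0 r0 =
      H1sup c s0 r0 / c.L1m / ((c.mu + c.nu - 1) * s0 ^ (c.mu + c.nu - 1)) := by
    rw [div_div, ← mul_assoc]
    rfl
  rw [hsup]
  refine integral_le_div_of_le_mul_rpow hs0 hη.1 hpos.exponent_pos (div_nonneg hH1sup hL1m.le)
    fun v hv => ?_
  have hvI : v ∈ Icc s0 r0 := ⟨hv.1, hv.2.trans hη.2⟩
  have hv0 := hs0.trans_le hv.1
  have hμpos := rpow_pos_of_pos hv0 c.mu
  have hνpos := rpow_pos_of_pos hv0 c.nu
  have hE := E1f_le_one hpos hA hf1 hf2 hvI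
  have hH1 := H1f_nonneg hpos hA hf1 (f2 := f2) hvI
  calc E1f c s0 r0 L1 N1 K1 L2 N2 K2 f1 f2 v * H1f c s0 r0 L1 N1 K1 L2 N2 K2 f1 f2 v
        / (L1 f1 v * v ^ c.nu)
      ≤ 1 * H1sup c s0 r0 / (c.L1m * v ^ c.mu * v ^ c.nu) :=
        div_le_div₀ (by positivity)
          (mul_le_mul hE (H1f_le_H1sup hpos hA hf1 hf2 hvI) hH1 zero_le_one) (by positivity)
          (mul_le_mul_of_nonneg_right (hA.2.2.1 f1 hf1 v hvI).1 hνpos.le)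
    _ = H1sup c s0 r0 / c.L1m * v ^ (-(c.mu + c.nu - 1 + 1)) := by
        rw [rpow_neg_add_sub_one_add_one hv0, rpow_neg hv0.le]
        field_simp

lemma le_G1f (hpos : PosC c s0 r0) (hA : Assum c s0 r0 L1 N1 K1 L2 N2 K2)
    (hf1 : f1 ∈ C1 s0 r0) (hf2 : f2 ∈ Mset r0) {η : ℝ} (hη : η ∈ Icc s0 r0) :
    c.K1m * E1inf c s0 r0 / (2 * c.L1M * (c.mu + c.nu - 1) ^ 2)
        * (s0 ^ (-(c.mu + c.nu - 1)) - η ^ (-(c.mu + c.nu - 1))) ^ 2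
      ≤ G1f c s0 r0 L1 N1 K1 L2 N2 K2 f1 f2 η := by
  have hs0 := hpos.s0_pos
  have hp := hpos.exponent_pos
  have hK1m : 0 < c.K1m := hpos.K1m_pos
  have hsub : Icc s0 η ⊆ Icc s0 r0 := Icc_subset_Icc_right hη.2
  set p := c.mu + c.nu - 1
  calc c.K1m * E1inf c s0 r0 / (2 * c.L1M * p ^ 2) * (s0 ^ (-p) - η ^ (-p)) ^ 2
      = ∫ v in s0..η,
          E1inf c s0 r0 * c.K1m / (p * c.L1M) * ((s0 ^ (-p) - v ^ (-p)) * v ^ (-(p + 1))) := by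
        rw [intervalIntegral.integral_const_mul, integral_sub_rpow_mul_rpow hs0 hη.1 hp.ne']
        field_simp
    _ ≤ G1f c s0 r0 L1 N1 K1 L2 N2 K2 f1 f2 η := by
        refine intervalIntegral.integral_mono_on hη.1 ?_
          (((continuousOn_G1f_integrand hpos hA hf1).mono hsub).intervalIntegrable_of_Icc hη.1)
          fun v hv => ?_
        · exact (continuousOn_const.mul
            ((continuousOn_const.sub (continuousOn_rpow_const_Icc hs0 _)).mul
              (continuousOn_rpow_const_Icc hs0 _))).intervalIntegrable_of_Icc hη.1
        have hvI := hsub hv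
        have hv0 := hs0.trans_le hv.1
        have hνpos := rpow_pos_of_pos hv0 c.nu
        have hH1low : 0 ≤ c.K1m / p * (s0 ^ (-p) - v ^ (-p)) :=
          mul_nonneg (div_pos hK1m hp).le
            (sub_nonneg.mpr (rpow_le_rpow_of_nonpos hs0 hv.1 (neg_nonpos.mpr hp.le)))
        calc E1inf c s0 r0 * c.K1m / (p * c.L1M) * ((s0 ^ (-p) - v ^ (-p)) * v ^ (-(p + 1)))
            = E1inf c s0 r0 * (c.K1m / p * (s0 ^ (-p) - v ^ (-p)))
                / (c.L1M * v ^ c.mu * v ^ c.nu) := by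
              rw [rpow_neg_add_sub_one_add_one hv0, rpow_neg hv0.le c.mu]
              field_simp
          _ ≤ E1f c s0 r0 L1 N1 K1 L2 N2 K2 f1 f2 v * H1f c s0 r0 L1 N1 K1 L2 N2 K2 f1 f2 v
                / (L1 f1 v * v ^ c.nu) :=
              div_le_div₀ (mul_nonneg (exp_pos _).le (H1f_nonneg hpos hA hf1 hvI))
                (mul_le_mul (E1inf_le_E1f hpos hA hf1 hf2 hvI) (mul_le_H1f hpos hA hf1 hf2 hvI)
                  hH1low (exp_pos _).le)
                (mul_pos (L1_pos hpos hA hf1 hvI) hνpos)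
                (mul_le_mul_of_nonneg_right (hA.2.2.1 f1 hf1 v hvI).2.1 hνpos.le)

end Estimates

theorem stmt8 (c : Cst) (s0 r0 : ℝ) (L1 N1 K1 L2 N2 K2 : (ℝ → ℝ) → ℝ → ℝ)
    (hpos : PosC c s0 r0) (hA : Assum c s0 r0 L1 N1 K1 L2 N2 K2)
    (f1 f2 : ℝ → ℝ) (hf1 : f1 ∈ C1 s0 r0) (hf2 : f2 ∈ Mset r0) :
    ∀ η ∈ Set.Icc s0 r0,
      c.K1m * E1inf c s0 r0 / (2 * c.L1M * (c.mu + c.nu - 1) ^ 2)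
            * (s0 ^ (-(c.mu + c.nu - 1)) - η ^ (-(c.mu + c.nu - 1))) ^ 2
          ≤ G1f c s0 r0 L1 N1 K1 L2 N2 K2 f1 f2 η ∧
        G1f c s0 r0 L1 N1 K1 L2 N2 K2 f1 f2 η ≤ G1sup c s0 r0 :=
  fun _ hη => ⟨le_G1f hpos hA hf1 hf2 hη, G1f_le_G1sup hpos hA hf1 hf2 hη⟩
end
end

section
/- Under assumptions (A1)–(A4) with μ > 2, for every (f1,f2) ∈ 𝒦 and every η ≥ r0 one has E2inf ≤ E2(η; f1,f2) ≤ 1, where E2inf = exp(−[a·N2M/(L2m·(μ−1)·r0^(2μ−2)) + D2·K2M/(H_inf·L2m·(2μ+ν−1)·r0^(2μ+ν−1))]) and H_inf = (K1m/(μ+ν−1))·(s0^(−(μ+ν−1)) − r0^(−(μ+ν−1))). -/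
open MeasureTheory Filter Topology

noncomputable section

/-! Under (A2) the integrand in the exponent of `E2` is nonnegative, whence `E2 ≤ 1`, and it is
dominated by `2a (N2M/L2m) v^(1-2μ) + (D2/H) (K2M/L2m) v^(-(2μ+ν))`. By (A1),
`H ≥ ∫_{s0}^{r0} K1m v^(-(μ+ν)) dv = H_inf`, so replacing `H` by `H_inf` and integrating the
majorant over `[r0, ∞)` bounds the exponent by that of `E2inf`. -/

open Set intervalIntegral

lemma integral_rpow_neg_le {a b q : ℝ} (ha : 0 < a) (hab : a ≤ b) (hq : 1 < q) :
    ∫ v in a..b, v ^ (-q) ≤ 1 / ((q - 1) * a ^ (q - 1)) := by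
  have hb : 0 < b := ha.trans_le hab
  rw [integral_rpow (Or.inr ⟨by linarith, notMem_uIcc_of_lt ha hb⟩),
    show -q + 1 = -(q - 1) by ring, Real.rpow_neg hb.le, Real.rpow_neg ha.le]
  have hq1 : 0 < q - 1 := by linarith
  have hqb : 0 < (b ^ (q - 1))⁻¹ := inv_pos.2 (Real.rpow_pos_of_pos hb _)
  calc ((b ^ (q - 1))⁻¹ - (a ^ (q - 1))⁻¹) / -(q - 1)
      = ((a ^ (q - 1))⁻¹ - (b ^ (q - 1))⁻¹) / (q - 1) := by rw [div_neg, ← neg_div, neg_sub]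
    _ ≤ (a ^ (q - 1))⁻¹ / (q - 1) := by gcongr; linarith
    _ = 1 / ((q - 1) * a ^ (q - 1)) := by rw [one_div, mul_inv, div_eq_mul_inv, mul_comm]

lemma integral_le_of_nonneg_of_le {f g : ℝ → ℝ} {a b : ℝ} (hab : a ≤ b)
    (hg : IntervalIntegrable g volume a b) (hf : ∀ x ∈ Icc a b, 0 ≤ f x)
    (hfg : ∀ x ∈ Icc a b, f x ≤ g x) : ∫ x in a..b, f x ≤ ∫ x in a..b, g x := by
  rw [integral_of_le hab, integral_of_le hab]
  exact integral_mono_of_nonneg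
    (ae_restrict_of_forall_mem measurableSet_Ioc fun x hx => hf x (Ioc_subset_Icc_self hx))
    hg.1
    (ae_restrict_of_forall_mem measurableSet_Ioc fun x hx => hfg x (Ioc_subset_Icc_self hx))

lemma integral_le_of_le_add_rpow_neg {f : ℝ → ℝ} {a b q₁ q₂ A₁ A₂ : ℝ} (ha : 0 < a)
    (hab : a ≤ b) (hq₁ : 1 < q₁) (hq₂ : 1 < q₂) (hA₁ : 0 ≤ A₁) (hA₂ : 0 ≤ A₂)
    (hf : ∀ x ∈ Icc a b, 0 ≤ f x)
    (hf_le : ∀ x ∈ Icc a b, f x ≤ A₁ * x ^ (-q₁) + A₂ * x ^ (-q₂)) :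
    ∫ x in a..b, f x ≤
      A₁ * (1 / ((q₁ - 1) * a ^ (q₁ - 1))) + A₂ * (1 / ((q₂ - 1) * a ^ (q₂ - 1))) := by
  have hint : ∀ q : ℝ, IntervalIntegrable (fun x : ℝ => x ^ (-q)) volume a b := fun q =>
    intervalIntegrable_rpow (Or.inr (notMem_uIcc_of_lt ha (ha.trans_le hab)))
  calc ∫ x in a..b, f x ≤ ∫ x in a..b, (A₁ * x ^ (-q₁) + A₂ * x ^ (-q₂)) :=
        integral_le_of_nonneg_of_le hab
          (((hint q₁).const_mul A₁).add ((hint q₂).const_mul A₂)) hf hf_le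
    _ = A₁ * (∫ x in a..b, x ^ (-q₁)) + A₂ * ∫ x in a..b, x ^ (-q₂) := by
        rw [integral_add ((hint q₁).const_mul A₁) ((hint q₂).const_mul A₂),
          intervalIntegral.integral_const_mul, intervalIntegral.integral_const_mul]
    _ ≤ _ := by
        gcongr
        · exact integral_rpow_neg_le ha hab hq₁
        · exact integral_rpow_neg_le ha hab hq₂

lemma div_le_of_rpow_bounds {v μ N L NM Lm : ℝ} (hv : 0 < v) (hLm : 0 < Lm) (hN : 0 ≤ N)
    (hNM : N ≤ NM * v ^ (-μ)) (hL : Lm * v ^ μ ≤ L) :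
    N / L ≤ NM / Lm * v ^ (-(2 * μ)) := by
  have hvμ : 0 < v ^ μ := Real.rpow_pos_of_pos hv μ
  calc N / L ≤ NM * v ^ (-μ) / (Lm * v ^ μ) :=
        div_le_div₀ (hN.trans hNM) hNM (by positivity) hL
    _ = NM / Lm * v ^ (-(2 * μ)) := by
        rw [show -(2 * μ) = -μ + -μ by ring, Real.rpow_add hv, Real.rpow_neg hv.le]
        field_simp

lemma exponent_integrand_bounds {v μ ν a D H Hm N L K NM Lm KM : ℝ} (hv : 0 < v) (ha : 0 ≤ a)
    (hD : 0 ≤ D) (hHm : 0 < Hm) (hH : Hm ≤ H) (hLm : 0 < Lm) (hL : Lm * v ^ μ ≤ L)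
    (hN : 0 ≤ N) (hNM : N ≤ NM * v ^ (-μ)) (hK : 0 ≤ K) (hKM : K ≤ KM * v ^ (-μ)) :
    0 ≤ 2 * a * v * (N / L) + D / H * (K / (L * v ^ ν)) ∧
      2 * a * v * (N / L) + D / H * (K / (L * v ^ ν)) ≤
        2 * a * (NM / Lm) * v ^ (-(2 * μ - 1)) + D / Hm * (KM / Lm) * v ^ (-(2 * μ + ν)) := by
  have hL0 : 0 < L := (mul_pos hLm (Real.rpow_pos_of_pos hv μ)).trans_le hL
  have hvν : 0 < v ^ ν := Real.rpow_pos_of_pos hv ν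
  have hH0 : 0 < H := hHm.trans_le hH
  have hNL := div_le_of_rpow_bounds hv hLm hN hNM hL
  have hKL := div_le_of_rpow_bounds hv hLm hK hKM hL
  refine ⟨by positivity, add_le_add ?_ ?_⟩
  · calc 2 * a * v * (N / L) ≤ 2 * a * v * (NM / Lm * v ^ (-(2 * μ))) := by gcongr
      _ = 2 * a * (NM / Lm) * v ^ (-(2 * μ - 1)) := by
          rw [show -(2 * μ - 1) = 1 + -(2 * μ) by ring, Real.rpow_add hv, Real.rpow_one]
          ring
  · calc D / H * (K / (L * v ^ ν)) = D / H * (K / L / v ^ ν) := by rw [div_div]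
      _ ≤ D / Hm * (KM / Lm * v ^ (-(2 * μ)) / v ^ ν) := by gcongr
      _ = D / Hm * (KM / Lm) * v ^ (-(2 * μ + ν)) := by
          rw [show -(2 * μ + ν) = -(2 * μ) - ν by ring, Real.rpow_sub hv]
          ring

lemma Hinf_eq_integral (c : Cst) {s0 r0 : ℝ} (hs0 : 0 < s0) (hsr : s0 ≤ r0)
    (hμν : 1 < c.mu + c.nu) :
    Hinf c s0 r0 = ∫ v in s0..r0, c.K1m * v ^ (-(c.mu + c.nu)) := by
  rw [intervalIntegral.integral_const_mul,
    integral_rpow (Or.inr ⟨by linarith, notMem_uIcc_of_lt hs0 (hs0.trans_le hsr)⟩),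
    show -(c.mu + c.nu) + 1 = -(c.mu + c.nu - 1) by ring, Hinf, div_neg, ← neg_div, neg_sub]
  ring

lemma Hinf_pos_s10 (c : Cst) {s0 r0 : ℝ} (hs0 : 0 < s0) (hsr : s0 < r0) (hK1m : 0 < c.K1m)
    (hμν : 1 < c.mu + c.nu) : 0 < Hinf c s0 r0 := by
  have : r0 ^ (-(c.mu + c.nu - 1)) < s0 ^ (-(c.mu + c.nu - 1)) :=
    Real.rpow_lt_rpow_of_neg hs0 hsr (by linarith)
  exact mul_pos (div_pos hK1m (by linarith)) (by linarith)

lemma Hinf_le_Hf_s10 (c : Cst) {s0 r0 : ℝ} {L1 N1 K1 L2 N2 K2 : (ℝ → ℝ) → ℝ → ℝ}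
    {f1 f2 : ℝ → ℝ}
    (hs0 : 0 < s0) (hsr : s0 ≤ r0) (hμν : 1 < c.mu + c.nu)
    (hK1c : ContinuousOn (K1 f1) (Icc s0 r0))
    (hK1 : ∀ v ∈ Icc s0 r0, c.K1m * v ^ (-c.mu) ≤ K1 f1 v)
    (hK2 : ∀ v ∈ Ioi r0, 0 ≤ K2 f2 v) :
    Hinf c s0 r0 ≤ Hf c s0 r0 L1 N1 K1 L2 N2 K2 f1 f2 := by
  have hpos : ∀ v ∈ Icc s0 r0, 0 < v := fun v hv => hs0.trans_le hv.1
  have hint : IntervalIntegrable (fun v => K1 f1 v / v ^ c.nu) volume s0 r0 :=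
    (hK1c.div (ContinuousOn.rpow_const continuousOn_id fun v hv => Or.inl (hpos v hv).ne')
      fun v hv => (Real.rpow_pos_of_pos (hpos v hv) _).ne').intervalIntegrable_of_Icc hsr
  have h1 : Hinf c s0 r0 ≤ ∫ v in s0..r0, K1 f1 v / v ^ c.nu := by
    rw [Hinf_eq_integral c hs0 hsr hμν]
    refine integral_mono_on hsr
      ((intervalIntegrable_rpow (Or.inr (notMem_uIcc_of_lt hs0 (hs0.trans_le hsr)))).const_mul _)
      hint fun v hv => ?_
    rw [show -(c.mu + c.nu) = -c.mu - c.nu by ring, Real.rpow_sub (hpos v hv), ← mul_div_assoc]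
    exact div_le_div_of_nonneg_right (hK1 v hv) (Real.rpow_pos_of_pos (hpos v hv) _).le
  have h2 : 0 ≤ ∫ v in Ioi r0, K2 f2 v / v ^ c.nu :=
    setIntegral_nonneg measurableSet_Ioi fun v hv =>
      div_nonneg (hK2 v hv) (Real.rpow_pos_of_pos (hs0.trans_le (hsr.trans hv.le)) _).le
  rw [Hf]
  linarith

lemma E2inf_eq (c : Cst) (s0 r0 : ℝ) :
    E2inf c s0 r0 = Real.exp (-(2 * c.a * (c.N2M / c.L2m) *
        (1 / ((2 * c.mu - 1 - 1) * r0 ^ (2 * c.mu - 1 - 1))) +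
      c.D2 / Hinf c s0 r0 * (c.K2M / c.L2m) *
        (1 / ((2 * c.mu + c.nu - 1) * r0 ^ (2 * c.mu + c.nu - 1))))) := by
  rw [E2inf, show 2 * c.mu - 1 - 1 = 2 * (c.mu - 1) by ring]
  simp only [div_eq_mul_inv, mul_inv]
  ring_nf

lemma E2_exponent_integrand_bounds {c : Cst} {s0 r0 : ℝ}
    {L1 N1 K1 L2 N2 K2 : (ℝ → ℝ) → ℝ → ℝ} {f1 f2 : ℝ → ℝ}
    (hA : Assum c s0 r0 L1 N1 K1 L2 N2 K2) (hf2 : f2 ∈ Mset r0) (hr0 : 0 < r0)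
    (ha : 0 ≤ c.a) (hD2 : 0 ≤ c.D2) (hL2m : 0 < c.L2m) (hN2m : 0 < c.N2m) (hK2m : 0 < c.K2m)
    (hHinf : 0 < Hinf c s0 r0) (hH : Hinf c s0 r0 ≤ Hf c s0 r0 L1 N1 K1 L2 N2 K2 f1 f2)
    {v : ℝ} (hv : r0 ≤ v) :
    0 ≤ 2 * c.a * v * (N2 f2 v / L2 f2 v)
        + c.D2 / Hf c s0 r0 L1 N1 K1 L2 N2 K2 f1 f2 * (K2 f2 v / (L2 f2 v * v ^ c.nu)) ∧
      2 * c.a * v * (N2 f2 v / L2 f2 v)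
          + c.D2 / Hf c s0 r0 L1 N1 K1 L2 N2 K2 f1 f2 * (K2 f2 v / (L2 f2 v * v ^ c.nu)) ≤
        2 * c.a * (c.N2M / c.L2m) * v ^ (-(2 * c.mu - 1))
          + c.D2 / Hinf c s0 r0 * (c.K2M / c.L2m) * v ^ (-(2 * c.mu + c.nu)) := by
  obtain ⟨hL, -, hN, hNM, hK, hKM⟩ := hA.2.2.2.1 f2 hf2 v hv
  have hv0 : 0 < v := hr0.trans_le hv
  have hvμ := Real.rpow_pos_of_pos hv0 (-c.mu)
  exact exponent_integrand_bounds hv0 ha hD2 hHinf hH hL2m hL ((mul_pos hN2m hvμ).le.trans hN) hNM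
    ((mul_pos hK2m hvμ).le.trans hK) hKM

theorem stmt10 (c : Cst) (s0 r0 : ℝ) (L1 N1 K1 L2 N2 K2 : (ℝ → ℝ) → ℝ → ℝ)
    (hpos : PosC c s0 r0) (hA : Assum c s0 r0 L1 N1 K1 L2 N2 K2)
    (f1 f2 : ℝ → ℝ) (hf1 : f1 ∈ C1 s0 r0) (hf2 : f2 ∈ Mset r0) :
    ∀ η ∈ Set.Ici r0,
      E2inf c s0 r0 ≤ E2f c s0 r0 L1 N1 K1 L2 N2 K2 f1 f2 η ∧ E2f c s0 r0 L1 N1 K1 L2 N2 K2 f1 f2 η ≤ 1 := by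
  obtain ⟨ha, hν, -, hμ, hs0, hsr, -, hD2, -, -, -, -, -, -, -, hK1m, -, hL2m, -, hN2m, hN2M,
    hK2m, hK2M, -⟩ := hpos
  have hr0 : 0 < r0 := hs0.trans hsr
  have hHinf := Hinf_pos_s10 c hs0 hsr hK1m (by linarith)
  have hH : Hinf c s0 r0 ≤ Hf c s0 r0 L1 N1 K1 L2 N2 K2 f1 f2 :=
    Hinf_le_Hf_s10 c hs0 hsr.le (by linarith) (hA.1 f1 hf1).2.2
      (fun v hv => (hA.2.2.1 f1 hf1 v hv).2.2.2.2.1) fun v hv =>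
        (mul_pos hK2m (Real.rpow_pos_of_pos (hr0.trans hv) _)).le.trans
          (hA.2.2.2.1 f2 hf2 v (Ioi_subset_Ici_self hv)).2.2.2.2.1
  intro η hη
  have hbounds := fun v (hv : v ∈ Icc r0 η) =>
    E2_exponent_integrand_bounds hA hf2 hr0 ha.le hD2.le hL2m hN2m hK2m hHinf hH hv.1
  refine ⟨?_, ?_⟩
  · rw [E2inf_eq, E2f, Real.exp_le_exp, neg_le_neg_iff]
    exact integral_le_of_le_add_rpow_neg hr0 hη (by linarith) (by linarith) (by positivity)
      (by positivity) (fun v hv => (hbounds v hv).1) fun v hv => (hbounds v hv).2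
  · rw [E2f, Real.exp_le_one_iff, neg_nonpos]
    exact integral_nonneg hη fun v hv => (hbounds v hv).1
end
end
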